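/- arXiv:1702.00922 — 2 statements merged into one kernel-verified Lean document; each statement's English description precedes it below -/
import Mathlib

section
/- For every α, β ∈ {−1, 1}, a three-element subset of the configuration C_{α,β} is collinear in ℙ²(ℝ) if and only if it is one of the following fifteen triples: {V₁,S₁,S₁₀}, {V₁,S₂,S₄}, {V₁,S₃,S₆}, {V₁,S₅,S₇}, {V₁,S₈,S₉}, {V₂,S₁,S₇}, {V₂,S₂,S₃}, {V₂,S₄,S₉}, {V₂,S₅,S₆}, {V₂,S₈,S₁₀}, {V₃,S₁,S₂}, {V₃,S₃,S₅}, {V₃,S₄,S₈}, {V₃,S₆,S₇}, {V₃,S₉,S₁₀}. In particular no four points of C_{α,β} are collinear. -/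
noncomputable section

/-- The real projective plane `ℙ²(ℝ)`. -/
abbrev ProjPlaneR := Projectivization ℝ (Fin 3 → ℝ)

/-- A vector `![a,b,c]` with a nonzero coordinate is nonzero. -/
theorem vne (a b c : ℝ) (i : Fin 3) (h : ![a, b, c] i ≠ 0) : ![a, b, c] ≠ 0 :=
  fun he => h (by rw [he]; simp)

/-- The point `(a : b : c)` of `ℙ²(ℝ)`. -/
def mkP (a b c : ℝ) (h : ![a, b, c] ≠ 0) : ProjPlaneR :=
  Projectivization.mk ℝ ![a, b, c] h

/-- A set of points of `ℙ²(ℝ)` lies on a common projective line iff some nonzero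
linear form vanishes on (representatives of) all of them. -/
def ProjCollinear (s : Set ProjPlaneR) : Prop :=
  ∃ f : (Fin 3 → ℝ) →ₗ[ℝ] ℝ, f ≠ 0 ∧ ∀ p ∈ s, f p.rep = 0

/-! The points of the configuration `C_{α,β}`. -/

def V₁ : ProjPlaneR := mkP 0 1 0 (vne _ _ _ 1 (by norm_num))
def V₂ : ProjPlaneR := mkP 1 0 0 (vne _ _ _ 0 (by norm_num))
def V₃ : ProjPlaneR := mkP 0 0 1 (vne _ _ _ 2 (by simp))
def S₁ : ProjPlaneR := mkP 1 1 1 (vne _ _ _ 0 (by norm_num))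
def S₂ : ProjPlaneR := mkP 4 4 1 (vne _ _ _ 0 (by norm_num))
def S₃ : ProjPlaneR := mkP (-1) 8 2 (vne _ _ _ 0 (by norm_num))
def S₄ : ProjPlaneR := mkP 8 (-1) 2 (vne _ _ _ 0 (by norm_num))
def S₅ (α : ℝ) : ProjPlaneR := mkP (-1) 8 (4 * α) (vne _ _ _ 0 (by norm_num))
def S₆ (α : ℝ) : ProjPlaneR := mkP (-1) (4 * α) 2 (vne _ _ _ 0 (by norm_num))
def S₇ (α : ℝ) : ProjPlaneR := mkP (-α) 4 4 (vne _ _ _ 1 (by norm_num))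
def S₈ (β : ℝ) : ProjPlaneR := mkP 8 (-1) (4 * β) (vne _ _ _ 0 (by norm_num))
def S₉ (β : ℝ) : ProjPlaneR := mkP (4 * β) (-1) 2 (vne _ _ _ 1 (by norm_num))
def S₁₀ (β : ℝ) : ProjPlaneR := mkP 4 (-β) 4 (vne _ _ _ 0 (by norm_num))

/-- The configuration `C_{α,β}` as a set of 13 points of `ℙ²(ℝ)`. -/
def Cconf (α β : ℝ) : Set ProjPlaneR :=
  {V₁, V₂, V₃, S₁, S₂, S₃, S₄, S₅ α, S₆ α, S₇ α, S₈ β, S₉ β, S₁₀ β}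

/-! For `α, β = ±1` the thirteen points have integer coordinates, and three points of `ℙ²(ℝ)`
are collinear exactly when the triple product (the determinant) of their representatives
vanishes. A finite computation over `ℤ` shows that the vanishing triples of distinct points are
precisely the fifteen listed ones. Any two of these fifteen lines share at most one point, so
four collinear points would put two distinct points on two different lines. -/

open Matrix

theorem forall_of_forall_lt_of_perm {α : Type*} [LinearOrder α] {P : α → α → α → Prop}
    (hcyc : ∀ {i j k}, P i j k → P j k i) (hswap : ∀ {i j k}, P i j k → P i k j)
    (h : ∀ {i j k}, i < j → j < k → P i j k) {i j k : α} (hij : i ≠ j) (hik : i ≠ k)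
    (hjk : j ≠ k) : P i j k := by
  rcases hij.lt_or_gt with hij | hji <;> rcases hik.lt_or_gt with hik | hki <;>
    rcases hjk.lt_or_gt with hjk | hkj
  · exact h hij hjk
  · exact hswap (h hik hkj)
  · exact absurd (hki.trans hij) hjk.asymm
  · exact hcyc (h hki hij)
  · exact hswap (hcyc (h hji hik))
  · exact absurd (hji.trans hik) hkj.asymm
  · exact hcyc (hcyc (h hjk hki))
  · exact hcyc (hswap (h hkj hji))

theorem Function.Injective.triple_eq_triple_iff {α β : Type*} [DecidableEq α] {f : α → β}
    (hf : Function.Injective f) {i j k a b c : α} :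
    ({f i, f j, f k} : Set β) = {f a, f b, f c} ↔ ({i, j, k} : Finset α) = {a, b, c} := by
  rw [← Finset.coe_inj, ← (Set.image_injective.2 hf).eq_iff]
  simp [Set.image_insert_eq]

theorem Projectivization.rep_dotProduct_eq_zero_iff {K n : Type*} [Field K] [Fintype n]
    {u : n → K} (hu : u ≠ 0) (g : n → K) :
    (Projectivization.mk K u hu).rep ⬝ᵥ g = 0 ↔ u ⬝ᵥ g = 0 := by
  obtain ⟨a, ha⟩ := Projectivization.exists_smul_eq_mk_rep K u hu
  rw [← ha, smul_dotProduct, Units.smul_def, smul_eq_mul, mul_eq_zero]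
  simp

theorem projCollinear_iff_exists_dotProduct (s : Set ProjPlaneR) :
    ProjCollinear s ↔ ∃ g ≠ 0, ∀ p ∈ s, p.rep ⬝ᵥ g = 0 := by
  let e := Module.piEquiv (Fin 3) ℝ ℝ
  have he : ∀ g x, e g x = x ⬝ᵥ g := fun g x => Module.piEquiv_apply_apply _ _ _ g x
  constructor
  · rintro ⟨f, hf, hs⟩
    refine ⟨e.symm f, by simpa using hf, fun p hp => ?_⟩
    rw [← he, e.apply_symm_apply]
    exact hs p hp
  · rintro ⟨g, hg, hs⟩
    exact ⟨e g, by simpa using hg, fun p hp => (he g _).trans (hs p hp)⟩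

theorem projCollinear_mk_iff {u v w : Fin 3 → ℝ} (hu : u ≠ 0) (hv : v ≠ 0) (hw : w ≠ 0) :
    ProjCollinear {Projectivization.mk ℝ u hu, Projectivization.mk ℝ v hv,
      Projectivization.mk ℝ w hw} ↔ u ⬝ᵥ v ⨯₃ w = 0 := by
  rw [projCollinear_iff_exists_dotProduct, triple_product_eq_det,
    show det ![u, v, w] = det (of ![u, v, w]) from rfl, ← exists_mulVec_eq_zero_iff]
  simp only [Set.forall_mem_insert, Set.mem_singleton_iff, forall_eq,
    Projectivization.rep_dotProduct_eq_zero_iff, cons_mulVec, cons_eq_zero_iff, empty_mulVec,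
    zero_empty, and_true]

theorem ProjCollinear.mono {s t : Set ProjPlaneR} (hst : s ⊆ t) (h : ProjCollinear t) :
    ProjCollinear s :=
  let ⟨f, hf, ht⟩ := h
  ⟨f, hf, fun p hp => ht p (hst hp)⟩

section Configuration

variable {R S : Type*} [CommRing R] [CommRing S]

/-- Representatives of `V₁, V₂, V₃, S₁, …, S₁₀`, indexed by `0, …, 12` in this order. -/
def confVec (α β : R) : Fin 13 → Fin 3 → R :=
  ![![0, 1, 0], ![1, 0, 0], ![0, 0, 1], ![1, 1, 1], ![4, 4, 1], ![-1, 8, 2], ![8, -1, 2],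
    ![-1, 8, 4 * α], ![-1, 4 * α, 2], ![-α, 4, 4], ![8, -1, 4 * β], ![4 * β, -1, 2],
    ![4, -β, 4]]

def confTriple (α β : R) (i j k : Fin 13) : R :=
  confVec α β i ⬝ᵥ confVec α β j ⨯₃ confVec α β k

theorem map_confTriple (f : R →+* S) (α β : R) (i j k : Fin 13) :
    f (confTriple α β i j k) = confTriple (f α) (f β) i j k := by
  have hvec : ∀ i, confVec (f α) (f β) i = f ∘ confVec α β i := by
    intro i
    funext n
    fin_cases i <;> fin_cases n <;> simp [confVec, map_ofNat f]
  simp [confTriple, hvec, cross_apply, dotProduct, Fin.sum_univ_three]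

end Configuration

def confLines : List (Finset (Fin 13)) :=
  [{0, 3, 12}, {0, 4, 6}, {0, 5, 8}, {0, 7, 9}, {0, 10, 11}, {1, 3, 9}, {1, 4, 5}, {1, 6, 11},
    {1, 7, 8}, {1, 10, 12}, {2, 3, 4}, {2, 5, 7}, {2, 6, 10}, {2, 8, 9}, {2, 11, 12}]

theorem confLines_pairwise_card_inter_le_one :
    confLines.Pairwise fun L M => (L ∩ M).card ≤ 1 := by
  decide +kernel

theorem exists_triple_notMem_confLines (i j : Fin 13) :
    ∃ k, i ≠ k ∧ j ≠ k ∧ {i, j, k} ∉ confLines := by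
  revert i j
  decide +kernel

theorem confTriple_eq_zero_iff_of_lt {a b : ℤ} (ha : a = 1 ∨ a = -1) (hb : b = 1 ∨ b = -1) :
    ∀ i j k : Fin 13, i < j → j < k → (confTriple a b i j k = 0 ↔ {i, j, k} ∈ confLines) := by
  rcases ha with rfl | rfl <;> rcases hb with rfl | rfl <;> decide +kernel

theorem confTriple_eq_zero_iff {a b : ℤ} (ha : a = 1 ∨ a = -1) (hb : b = 1 ∨ b = -1)
    {i j k : Fin 13} (hij : i ≠ j) (hik : i ≠ k) (hjk : j ≠ k) :
    confTriple a b i j k = 0 ↔ {i, j, k} ∈ confLines := by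
  refine forall_of_forall_lt_of_perm
    (P := fun i j k => confTriple a b i j k = 0 ↔ {i, j, k} ∈ confLines) ?_ ?_
    (confTriple_eq_zero_iff_of_lt ha hb _ _ _) hij hik hjk
  · intro i j k h
    rw [confTriple, ← triple_product_permutation, Finset.pair_comm, Finset.insert_comm]
    exact h
  · intro i j k h
    rw [confTriple, ← cross_anticomm, dotProduct_neg, neg_eq_zero, Finset.pair_comm]
    exact h

theorem eq_of_mem_confLines {L M : Finset (Fin 13)} (hL : L ∈ confLines) (hM : M ∈ confLines)
    {i j : Fin 13} (hij : i ≠ j) (hi : i ∈ L ∩ M) (hj : j ∈ L ∩ M) : L = M := by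
  by_contra hLM
  have : Std.Symm fun L M : Finset (Fin 13) => (L ∩ M).card ≤ 1 :=
    ⟨fun L M h => by rwa [Finset.inter_comm]⟩
  have hLM := confLines_pairwise_card_inter_le_one.forall hL hM hLM
  exact hij (Finset.card_le_one.1 hLM i hi j hj)

theorem confVec_ne_zero (α β : ℝ) (i : Fin 13) : confVec α β i ≠ 0 := by
  fin_cases i <;> simp [confVec, funext_iff, Fin.forall_fin_succ]

def confPoint (α β : ℝ) (i : Fin 13) : ProjPlaneR :=
  Projectivization.mk ℝ (confVec α β i) (confVec_ne_zero α β i)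

theorem range_confPoint (α β : ℝ) : Set.range (confPoint α β) = Cconf α β := by
  have : confPoint α β = ![V₁, V₂, V₃, S₁, S₂, S₃, S₄, S₅ α, S₆ α, S₇ α, S₈ β, S₉ β, S₁₀ β] := by
    funext i
    fin_cases i <;> rfl
  simp only [this, range_cons, range_empty, Set.union_empty, Set.singleton_union]
  rfl

theorem projCollinear_confPoint_iff (a b : ℤ) (i j k : Fin 13) :
    ProjCollinear {confPoint a b i, confPoint a b j, confPoint a b k} ↔
      confTriple a b i j k = 0 := by
  have hcast := map_confTriple (Int.castRingHom ℝ) a b i j k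
  simp only [eq_intCast] at hcast
  rw [confPoint, confPoint, confPoint, projCollinear_mk_iff, ← Int.cast_eq_zero (α := ℝ), hcast,
    confTriple]

theorem confPoint_injective {a b : ℤ} (ha : a = 1 ∨ a = -1) (hb : b = 1 ∨ b = -1) :
    Function.Injective (confPoint a b) := by
  intro i j hij
  by_contra hne
  obtain ⟨k, hik, hjk, hk⟩ := exists_triple_notMem_confLines i j
  apply hk
  rw [← confTriple_eq_zero_iff ha hb hne hik hjk, ← projCollinear_confPoint_iff, hij,
    projCollinear_confPoint_iff]
  exact dot_self_cross _ _

theorem mem_confLines_of_projCollinear {a b : ℤ} (ha : a = 1 ∨ a = -1) (hb : b = 1 ∨ b = -1)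
    {i j k : Fin 13} {s : Set ProjPlaneR} (hs : ProjCollinear s)
    (hsub : {confPoint a b i, confPoint a b j, confPoint a b k} ⊆ s)
    (hij : confPoint a b i ≠ confPoint a b j) (hik : confPoint a b i ≠ confPoint a b k)
    (hjk : confPoint a b j ≠ confPoint a b k) : {i, j, k} ∈ confLines := by
  rw [← confTriple_eq_zero_iff ha hb (ne_of_apply_ne _ hij) (ne_of_apply_ne _ hik)
    (ne_of_apply_ne _ hjk), ← projCollinear_confPoint_iff]
  exact hs.mono hsub

/--
For `α, β ∈ {−1,1}`, a three-element subset of the configuration `C_{α,β}`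
is collinear in `ℙ²(ℝ)` iff it is one of the fifteen listed triples; in particular no
four points of `C_{α,β}` are collinear.
-/
theorem stmt_1 (α β : ℝ) (hα : α = 1 ∨ α = -1) (hβ : β = 1 ∨ β = -1) :
    (∀ p q r : ProjPlaneR, p ∈ Cconf α β → q ∈ Cconf α β → r ∈ Cconf α β →
      p ≠ q → p ≠ r → q ≠ r →
      (ProjCollinear {p, q, r} ↔
        (({p, q, r} : Set ProjPlaneR) = {V₁, S₁, S₁₀ β} ∨
         ({p, q, r} : Set ProjPlaneR) = {V₁, S₂, S₄} ∨
         ({p, q, r} : Set ProjPlaneR) = {V₁, S₃, S₆ α} ∨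
         ({p, q, r} : Set ProjPlaneR) = {V₁, S₅ α, S₇ α} ∨
         ({p, q, r} : Set ProjPlaneR) = {V₁, S₈ β, S₉ β} ∨
         ({p, q, r} : Set ProjPlaneR) = {V₂, S₁, S₇ α} ∨
         ({p, q, r} : Set ProjPlaneR) = {V₂, S₂, S₃} ∨
         ({p, q, r} : Set ProjPlaneR) = {V₂, S₄, S₉ β} ∨
         ({p, q, r} : Set ProjPlaneR) = {V₂, S₅ α, S₆ α} ∨
         ({p, q, r} : Set ProjPlaneR) = {V₂, S₈ β, S₁₀ β} ∨
         ({p, q, r} : Set ProjPlaneR) = {V₃, S₁, S₂} ∨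
         ({p, q, r} : Set ProjPlaneR) = {V₃, S₃, S₅ α} ∨
         ({p, q, r} : Set ProjPlaneR) = {V₃, S₄, S₈ β} ∨
         ({p, q, r} : Set ProjPlaneR) = {V₃, S₆ α, S₇ α} ∨
         ({p, q, r} : Set ProjPlaneR) = {V₃, S₉ β, S₁₀ β}))) ∧
    (∀ p q r s : ProjPlaneR, p ∈ Cconf α β → q ∈ Cconf α β → r ∈ Cconf α β → s ∈ Cconf α β →
      p ≠ q → p ≠ r → p ≠ s → q ≠ r → q ≠ s → r ≠ s →
      ¬ ProjCollinear {p, q, r, s}) := by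
  obtain ⟨a, ha, rfl⟩ : ∃ a : ℤ, (a = 1 ∨ a = -1) ∧ α = a := by
    rcases hα with rfl | rfl
    exacts [⟨1, by simp⟩, ⟨-1, by simp⟩]
  obtain ⟨b, hb, rfl⟩ : ∃ b : ℤ, (b = 1 ∨ b = -1) ∧ β = b := by
    rcases hβ with rfl | rfl
    exacts [⟨1, by simp⟩, ⟨-1, by simp⟩]
  rw [← range_confPoint]
  refine ⟨?_, ?_⟩
  · rintro _ _ _ ⟨i, rfl⟩ ⟨j, rfl⟩ ⟨k, rfl⟩ hij hik hjk
    rw [projCollinear_confPoint_iff, confTriple_eq_zero_iff ha hb (ne_of_apply_ne _ hij)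
      (ne_of_apply_ne _ hik) (ne_of_apply_ne _ hjk)]
    simp only [confLines, List.mem_cons, List.not_mem_nil, or_false,
      ← (confPoint_injective ha hb).triple_eq_triple_iff]
    -- `confPoint a b 0, …, confPoint a b 12` unfold to `V₁, …, S₁₀ b`
    exact Iff.rfl
  · rintro _ _ _ _ ⟨i, rfl⟩ ⟨j, rfl⟩ ⟨k, rfl⟩ ⟨l, rfl⟩ hij hik hil hjk hjl hkl hcoll
    have hijk := mem_confLines_of_projCollinear ha hb hcoll (by simp [Set.insert_subset_iff])
      hij hik hjk
    have hijl := mem_confLines_of_projCollinear ha hb hcoll (by simp [Set.insert_subset_iff])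
      hij hil hjl
    have hl : l ∈ ({i, j, k} : Finset (Fin 13)) := by
      rw [eq_of_mem_confLines hijk hijl (ne_of_apply_ne _ hij) (by simp) (by simp)]
      simp
    simp only [Finset.mem_insert, Finset.mem_singleton] at hl
    rcases hl with rfl | rfl | rfl
    exacts [hil rfl, hjl rfl, hkl rfl]

end
end

section
/- For α, β ∈ {−1, 1}, let ℓ₁₂ be the projective line of ℙ²(ℝ) through the points S₁ and S₂ of C_{α,β}, let ℓ₅₆ be the line through S₅ and S₆, and let ℓ₈₉ be the line through S₈ and S₉. Then the three lines ℓ₁₂, ℓ₅₆, ℓ₈₉ have a common point if and only if αβ = 1. -/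
/-!
The representatives of the points on the line through `(u)` and `(v)` are orthogonal to its normal
vector `u ⨯₃ v`, so three concurrent lines have linearly dependent normals. For
`ℓ₁₂, ℓ₅₆, ℓ₈₉` the determinant of the normals equals `72 (β - α)` once `α² = β² = 1`, which
forces `α = β`. Conversely, for `α = β` the point `(2 : 2 : α)` lies on all three lines.
-/

noncomputable section

/-- The projective line of `ℙ²(ℝ)` through two points `p` and `q`:
the set of points whose representative lies in the span of representatives of `p` and `q`. -/
def lineThrough (p q : ProjPlaneR) : Set ProjPlaneR :=
  {x | x.rep ∈ Submodule.span ℝ ({p.rep, q.rep} : Set (Fin 3 → ℝ))}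

open Projectivization Submodule Matrix

theorem mem_lineThrough_iff (x p q : ProjPlaneR) :
    x ∈ lineThrough p q ↔ x.submodule ≤ p.submodule ⊔ q.submodule := by
  rw [lineThrough, Set.mem_ofPred_eq, x.submodule_eq, span_singleton_le_iff_mem, p.submodule_eq,
    q.submodule_eq, ← span_insert]

theorem mk_mem_lineThrough_mk_iff {u v w : Fin 3 → ℝ} (hu : u ≠ 0) (hv : v ≠ 0) (hw : w ≠ 0) :
    mk ℝ w hw ∈ lineThrough (mk ℝ u hu) (mk ℝ v hv) ↔ w ∈ span ℝ {u, v} := by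
  rw [mem_lineThrough_iff, submodule_mk, submodule_mk, submodule_mk, span_singleton_le_iff_mem,
    ← span_insert]

theorem dotProduct_cross_eq_zero_of_mem_span_pair {R : Type*} [CommRing R] {u v w : Fin 3 → R}
    (h : w ∈ span R {u, v}) : w ⬝ᵥ u ⨯₃ v = 0 := by
  obtain ⟨a, b, rfl⟩ := mem_span_pair.1 h
  simp only [add_dotProduct, smul_dotProduct, dot_self_cross, dot_cross_self, smul_zero, add_zero]

theorem rep_dotProduct_cross_eq_zero {x : ProjPlaneR} {u v : Fin 3 → ℝ} {hu : u ≠ 0} {hv : v ≠ 0}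
    (h : x ∈ lineThrough (mk ℝ u hu) (mk ℝ v hv)) : x.rep ⬝ᵥ u ⨯₃ v = 0 := by
  rw [← x.mk_rep, mk_mem_lineThrough_mk_iff] at h
  exact dotProduct_cross_eq_zero_of_mem_span_pair h

theorem det_cross_eq_zero_of_concurrent {u₁ v₁ u₂ v₂ u₃ v₃ : Fin 3 → ℝ} {hu₁ : u₁ ≠ 0}
    {hv₁ : v₁ ≠ 0} {hu₂ : u₂ ≠ 0} {hv₂ : v₂ ≠ 0} {hu₃ : u₃ ≠ 0} {hv₃ : v₃ ≠ 0} {x : ProjPlaneR}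
    (h₁ : x ∈ lineThrough (mk ℝ u₁ hu₁) (mk ℝ v₁ hv₁))
    (h₂ : x ∈ lineThrough (mk ℝ u₂ hu₂) (mk ℝ v₂ hv₂))
    (h₃ : x ∈ lineThrough (mk ℝ u₃ hu₃) (mk ℝ v₃ hv₃)) :
    det (of ![u₁ ⨯₃ v₁, u₂ ⨯₃ v₂, u₃ ⨯₃ v₃]) = 0 := by
  refine exists_mulVec_eq_zero_iff.1 ⟨x.rep, x.rep_nonzero, ?_⟩
  ext i
  fin_cases i
  · simpa [mulVec, dotProduct_comm] using rep_dotProduct_cross_eq_zero h₁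
  · simpa [mulVec, dotProduct_comm] using rep_dotProduct_cross_eq_zero h₂
  · simpa [mulVec, dotProduct_comm] using rep_dotProduct_cross_eq_zero h₃

theorem det_normals_eq {α β : ℝ} (hα : α ^ 2 = 1) (hβ : β ^ 2 = 1) :
    det (of ![![1, 1, 1] ⨯₃ ![4, 4, 1], ![-1, 8, 4 * α] ⨯₃ ![-1, 4 * α, 2],
      ![8, -1, 4 * β] ⨯₃ ![4 * β, -1, 2]]) = 72 * (β - α) := by
  rw [det_fin_three]
  simp only [cross_apply, of_apply, cons_val', cons_val_zero, cons_val_one, cons_val,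
    cons_val_fin_one]
  linear_combination (192 * β - 384) * hα + (384 - 192 * α) * hβ

theorem eq_of_lines_concurrent {α β : ℝ} (hα : α ^ 2 = 1) (hβ : β ^ 2 = 1)
    (h : ∃ x : ProjPlaneR, x ∈ lineThrough S₁ S₂ ∧ x ∈ lineThrough (S₅ α) (S₆ α) ∧
      x ∈ lineThrough (S₈ β) (S₉ β)) : α = β := by
  obtain ⟨x, h₁₂, h₅₆, h₈₉⟩ := h
  have hdet := det_cross_eq_zero_of_concurrent h₁₂ h₅₆ h₈₉
  rw [det_normals_eq hα hβ] at hdet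
  linarith

theorem lines_concurrent_of_sq_eq_one {α : ℝ} (hα : α ^ 2 = 1) :
    ∃ x : ProjPlaneR, x ∈ lineThrough S₁ S₂ ∧ x ∈ lineThrough (S₅ α) (S₆ α) ∧
      x ∈ lineThrough (S₈ α) (S₉ α) := by
  refine ⟨mk ℝ ![2, 2, α] (vne _ _ _ 0 (by norm_num)), ?_, ?_, ?_⟩ <;>
    refine (mk_mem_lineThrough_mk_iff _ _ _).2 (mem_span_pair.2 ?_)
  · exact ⟨(4 * α - 2) / 3, (2 - α) / 3, by
      rw [smul_vec3, smul_vec3, vec3_add]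
      refine vec3_eq ?_ ?_ ?_ <;> simp only [smul_eq_mul] <;> ring⟩
  -- `S₈, S₉` are `S₅, S₆` with the first two coordinates swapped, and `(2 : 2 : α)` is symmetric.
  all_goals exact ⟨1 + 3 * α / 2, -3 - 3 * α / 2, by
    rw [smul_vec3, smul_vec3, vec3_add]
    refine vec3_eq ?_ ?_ ?_ <;> simp only [smul_eq_mul] <;> grind⟩

/--
For `α, β ∈ {−1,1}`, the line `ℓ₁₂` through `S₁, S₂`, the line `ℓ₅₆`
through `S₅, S₆`, and the line `ℓ₈₉` through `S₈, S₉` of the configuration `C_{α,β}`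
have a common point if and only if `αβ = 1`.
-/
theorem stmt_15 (α β : ℝ) (hα : α = 1 ∨ α = -1) (hβ : β = 1 ∨ β = -1) :
    (∃ x : ProjPlaneR,
      x ∈ lineThrough S₁ S₂ ∧ x ∈ lineThrough (S₅ α) (S₆ α) ∧
      x ∈ lineThrough (S₈ β) (S₉ β)) ↔ α * β = 1 := by
  have hα2 : α ^ 2 = 1 := by rcases hα with rfl | rfl <;> norm_num
  have hβ2 : β ^ 2 = 1 := by rcases hβ with rfl | rfl <;> norm_num
  constructor
  · intro h
    rw [← eq_of_lines_concurrent hα2 hβ2 h]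
    linear_combination hα2
  · intro h
    obtain rfl : β = α := by linear_combination α * h - β * hα2
    exact lines_concurrent_of_sq_eq_one hα2

end
end
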